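/- arXiv:2102.10092 — 2 statements merged into one kernel-verified Lean document; each statement's English description precedes it below -/
import Mathlib

section
/- Let X be a shift space over A, σ : A* → B* an injective strongly left proper morphism with first letter ℓ, Y the image of X under σ, and u a nonempty word of L(Y). If ℓ does not occur in u, then there exists b ∈ A such that u is a non-prefix factor of σ(b), i.e. σ(b) = x u y for some nonempty word x and some word y. If ℓ occurs in u, then there exists a unique triple (s, v, p) ∈ B* × L(X) × B* such that u = sσ(v)p and there exists a pair (a,b) ∈ E_X(v) with s a proper suffix of σ(a) and p a nonempty prefix of σ(b). -/
open Classical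

/-! ### Basic shift-space definitions -/

/-- The shift map `S` on bi-infinite words over `A`. -/
def shiftMap (A : Type*) : (ℤ → A) → (ℤ → A) := fun x n => x (n + 1)

/-- The product topology on `ℤ → A`, each copy of `A` carrying the discrete topology. -/
def seqTop (A : Type*) : TopologicalSpace (ℤ → A) :=
  @Pi.topologicalSpace ℤ (fun _ => A) (fun _ => ⊥)

/-- A shift space: a closed, shift-invariant subset of `A^ℤ`. -/
def IsShiftSpace {A : Type*} (X : Set (ℤ → A)) : Prop :=
  @IsClosed _ (seqTop A) X ∧ shiftMap A '' X = X

/-- A minimal shift space: the only closed shift-invariant subsets are `∅` and `X`. -/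
def IsMinimalShift {A : Type*} (X : Set (ℤ → A)) : Prop :=
  IsShiftSpace X ∧
    ∀ Y : Set (ℤ → A), Y ⊆ X → @IsClosed _ (seqTop A) Y → shiftMap A '' Y = Y →
      Y = ∅ ∨ Y = X

/-- The finite word `w` occurs as a factor of the bi-infinite word `x`. -/
def occursIn {A : Type*} (w : List A) (x : ℤ → A) : Prop :=
  ∃ i : ℤ, w = List.ofFn (fun k : Fin w.length => x (i + (k.val : ℤ)))

/-- The language of `X`: all finite factors of elements of `X`. -/
def language {A : Type*} (X : Set (ℤ → A)) : Set (List A) :=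
  {w | ∃ x ∈ X, occursIn w x}

/-- The factor complexity `p_X(n)`. -/
noncomputable def complexity {A : Type*} (X : Set (ℤ → A)) (n : ℕ) : ℕ :=
  {w ∈ language X | w.length = n}.ncard

/-- Left extensions `E⁻(w)` of `w` in `X`. -/
def extLeft {A : Type*} (X : Set (ℤ → A)) (w : List A) : Set A :=
  {a | (a :: w) ∈ language X}

/-- Right extensions `E⁺(w)` of `w` in `X`. -/
def extRight {A : Type*} (X : Set (ℤ → A)) (w : List A) : Set A :=
  {b | (w ++ [b]) ∈ language X}

/-- Bi-extensions `E(w)` of `w` in `X`. -/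
def extBoth {A : Type*} (X : Set (ℤ → A)) (w : List A) : Set (A × A) :=
  {p | (p.1 :: (w ++ [p.2])) ∈ language X}

def LeftSpecial {A : Type*} (X : Set (ℤ → A)) (w : List A) : Prop :=
  2 ≤ (extLeft X w).ncard

def RightSpecial {A : Type*} (X : Set (ℤ → A)) (w : List A) : Prop :=
  2 ≤ (extRight X w).ncard

def Bispecial {A : Type*} (X : Set (ℤ → A)) (w : List A) : Prop :=
  LeftSpecial X w ∧ RightSpecial X w

/-! ### Extension graphs -/

/-- The bipartite graph on `A ⊕ A` (left copy ⊕ right copy) whose edges are given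
by a set `E` of pairs. -/
def pairGraph {A : Type*} (E : Set (A × A)) : SimpleGraph (A ⊕ A) :=
  SimpleGraph.fromRel (fun u v => ∃ a b, u = Sum.inl a ∧ v = Sum.inr b ∧ (a, b) ∈ E)

/-- The vertices of `A ⊕ A` incident to some edge of `E`. -/
def pairSupport {A : Type*} (E : Set (A × A)) : Set (A ⊕ A) :=
  Sum.inl '' {a | ∃ b, (a, b) ∈ E} ∪ Sum.inr '' {b | ∃ a, (a, b) ∈ E}

/-- The vertex set of the extension graph of `w`: `E⁻(w) ⊔ E⁺(w)`. -/
def extVertices {A : Type*} (X : Set (ℤ → A)) (w : List A) : Set (A ⊕ A) :=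
  Sum.inl '' extLeft X w ∪ Sum.inr '' extRight X w

/-- `w` is dendric in `X`: its extension graph is a tree. -/
def IsDendric {A : Type*} (X : Set (ℤ → A)) (w : List A) : Prop :=
  ((pairGraph (extBoth X w)).induce (extVertices X w)).IsTree

/-- A dendric shift: a shift space all of whose factors are dendric. -/
def IsDendricShift {A : Type*} (X : Set (ℤ → A)) : Prop :=
  IsShiftSpace X ∧ ∀ w ∈ language X, IsDendric X w

/-- The graph with edge set `E` and vertices those incident to an edge, is a tree. -/
def restrictedIsTree {A : Type*} (E : Set (A × A)) : Prop :=
  ((pairGraph E).induce (pairSupport E)).IsTree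

/-- An ordinary bispecial factor. -/
def Ordinary {A : Type*} (X : Set (ℤ → A)) (w : List A) : Prop :=
  Bispecial X w ∧ ∃ p ∈ extBoth X w, ∀ q ∈ extBoth X w, q.1 = p.1 ∨ q.2 = p.2

/-- An Arnoux-Rauzy shift over `A`. -/
def IsArnouxRauzy {A : Type*} (X : Set (ℤ → A)) : Prop :=
  IsMinimalShift X ∧ ∀ n : ℕ, 1 ≤ n →
    (∃! u : List A, u ∈ language X ∧ u.length = n ∧ LeftSpecial X u) ∧
    (∃! v : List A, v ∈ language X ∧ v.length = n ∧ RightSpecial X v) ∧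
    (∀ u ∈ language X, u.length = n → LeftSpecial X u → extLeft X u = Set.univ) ∧
    (∀ v ∈ language X, v.length = n → RightSpecial X v → extRight X v = Set.univ)

/-! ### Morphisms -/

/-- Apply a morphism (given by its images of letters) to a finite word. -/
def applyWord {A B : Type*} (σ : A → List B) (w : List A) : List B :=
  (w.map σ).flatten

def NonErasing {A B : Type*} (σ : A → List B) : Prop := ∀ a, σ a ≠ []

/-- `σ` is strongly left proper with first letter `ℓ`: every `σ a` starts with `ℓ`
and `ℓ` occurs exactly once in `σ a`. -/
def StronglyLeftProper {A B : Type*} (σ : A → List B) (ℓ : B) : Prop :=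
  ∀ a, ∃ w : List B, σ a = ℓ :: w ∧ ℓ ∉ w

/-- Apply a (non-erasing) morphism to a bi-infinite word, anchored so that
`σ (x 0)` starts at index `0`. -/
noncomputable def applyPoint {A B : Type*} [Nonempty B] (σ : A → List B) (x : ℤ → A) :
    ℤ → B := fun m =>
  letI : Inhabited B := Classical.inhabited_of_nonempty inferInstance
  if 0 ≤ m then
    (applyWord σ (List.ofFn (fun k : Fin (m.toNat + 1) => x (k.val : ℤ)))).getD m.toNat default
  else
    let K := (-m).toNat
    let L := applyWord σ (List.ofFn (fun k : Fin K => x ((k.val : ℤ) - (K : ℤ))))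
    L.getD ((L.length : ℤ) + m).toNat default

/-- The image of a shift space `X` under the morphism `σ`:
`Y = {S^k σ(x) : x ∈ X, 0 ≤ k < |σ(x₀)|}`. -/
def shiftImage {A B : Type*} [Nonempty B] (σ : A → List B) (X : Set (ℤ → A)) :
    Set (ℤ → B) :=
  {y | ∃ x ∈ X, ∃ k : ℕ, k < (σ (x 0)).length ∧ y = (shiftMap B)^[k] (applyPoint σ x)}

/-- `u` is an extended image of `v` under the injective strongly left proper
morphism `σ` (with first letter `ℓ`). -/
def ExtendedImage {A B : Type*} [Nonempty B] (σ : A → List B) (ℓ : B)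
    (X : Set (ℤ → A)) (v : List A) (u : List B) : Prop :=
  u ∈ language (shiftImage σ X) ∧ u ≠ [] ∧ ℓ ∈ u ∧ v ∈ language X ∧
    ∃ (s p : List B) (a b : A), u = s ++ applyWord σ v ++ p ∧ (a, b) ∈ extBoth X v ∧
      s <:+ σ a ∧ s ≠ σ a ∧ p ≠ [] ∧ p <+: σ b

/-- `σ` is dendric preserving for the factor `v` of `X`: every bispecial extended
image of `v` is dendric in the image shift. -/
def DendricPreservingFor {A B : Type*} [Nonempty B] (σ : A → List B) (ℓ : B)
    (X : Set (ℤ → A)) (v : List A) : Prop :=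
  ∀ u, ExtendedImage σ ℓ X v u → Bispecial (shiftImage σ X) u →
    IsDendric (shiftImage σ X) u

/-! ### Longest common prefixes and suffixes -/

/-- Longest common prefix of two words. -/
def lcp {B : Type*} [DecidableEq B] : List B → List B → List B
  | a :: l, b :: m => if a = b then a :: lcp l m else []
  | _, _ => []

/-- Longest common suffix of two words. -/
def lcs {B : Type*} [DecidableEq B] (l m : List B) : List B :=
  (lcp l.reverse m.reverse).reverse

/-- `T⁻(σ)`: longest common suffixes of images of distinct letters. -/
def Tminus {A B : Type*} [DecidableEq B] (σ : A → List B) : Set (List B) :=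
  {s | ∃ a₁ a₂ : A, a₁ ≠ a₂ ∧ s = lcs (σ a₁) (σ a₂)}

/-- `T⁺(σ)`: longest common prefixes of images of distinct letters. -/
def Tplus {A B : Type*} [DecidableEq B] (σ : A → List B) : Set (List B) :=
  {p | ∃ b₁ b₂ : A, b₁ ≠ b₂ ∧ p = lcp (σ b₁) (σ b₂)}

/-- `T⁻_v(σ)`. -/
def TminusV {A B : Type*} [DecidableEq B] (σ : A → List B) (X : Set (ℤ → A))
    (v : List A) : Set (List B) :=
  {s | ∃ a₁ a₂ : A, a₁ ≠ a₂ ∧ a₁ ∈ extLeft X v ∧ a₂ ∈ extLeft X v ∧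
    s = lcs (σ a₁) (σ a₂)}

/-- `T⁺_v(σ)`. -/
def TplusV {A B : Type*} [DecidableEq B] (σ : A → List B) (X : Set (ℤ → A))
    (v : List A) : Set (List B) :=
  {p | ∃ b₁ b₂ : A, b₁ ≠ b₂ ∧ b₁ ∈ extRight X v ∧ b₂ ∈ extRight X v ∧
    p = lcp (σ b₁) (σ b₂)}

/-- `E⁻_{X,s}(v)`. -/
def extLeftS {A B : Type*} (σ : A → List B) (X : Set (ℤ → A)) (v : List A)
    (s : List B) : Set A :=
  {a ∈ extLeft X v | s <:+ σ a}

/-- `E⁺_{X,p}(v)`. -/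
def extRightP {A B : Type*} (σ : A → List B) (ℓ : B) (X : Set (ℤ → A)) (v : List A)
    (p : List B) : Set A :=
  {b ∈ extRight X v | p <+: (σ b ++ [ℓ])}

/-- `E_{X,s,p}(v)`. -/
def extBothSP {A B : Type*} (σ : A → List B) (ℓ : B) (X : Set (ℤ → A)) (v : List A)
    (s p : List B) : Set (A × A) :=
  {q ∈ extBoth X v | q.1 ∈ extLeftS σ X v s ∧ q.2 ∈ extRightP σ ℓ X v p}

/-- `σ` is left-invariant: `T⁻(σ)` is a singleton. -/
def LeftInvariant {A B : Type*} [DecidableEq B] (σ : A → List B) : Prop :=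
  ∃ s, Tminus σ = {s}

/-- `σ` is right-invariant: `T⁺(σ)` is a singleton. -/
def RightInvariant {A B : Type*} [DecidableEq B] (σ : A → List B) : Prop :=
  ∃ p, Tplus σ = {p}

/-! ### The sets `C⁻` and `C⁺` -/

/-- Edges of `E` not incident to the left vertex `a`. -/
def delLeft {A : Type*} (E : Set (A × A)) (a : A) : Set (A × A) := {p ∈ E | p.1 ≠ a}

/-- Edges of `E` not incident to the right vertex `b`. -/
def delRight {A : Type*} (E : Set (A × A)) (b : A) : Set (A × A) := {p ∈ E | p.2 ≠ b}

/-- `C⁻_X(v)`: letters `a` whose deletion (as a left vertex, removing resulting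
isolated vertices) disconnects the extension graph of `v`. -/
def Cminus {A : Type*} (X : Set (ℤ → A)) (v : List A) : Set A :=
  {a | ¬ ((pairGraph (delLeft (extBoth X v) a)).induce
      (pairSupport (delLeft (extBoth X v) a))).Preconnected}

/-- `C⁺_X(v)`. -/
def Cplus {A : Type*} (X : Set (ℤ → A)) (v : List A) : Set A :=
  {b | ¬ ((pairGraph (delRight (extBoth X v) b)).induce
      (pairSupport (delRight (extBoth X v) b))).Preconnected}

/-- `C⁻(X) = ⋃_{v ∈ L(X)} C⁻_X(v)`. -/
def CminusShift {A : Type*} (X : Set (ℤ → A)) : Set A :=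
  {a | ∃ v ∈ language X, a ∈ Cminus X v}

/-- `C⁺(X)`. -/
def CplusShift {A : Type*} (X : Set (ℤ → A)) : Set A :=
  {b | ∃ v ∈ language X, b ∈ Cplus X v}

/-! ### The ternary alphabet and the set `S₃` -/

/-- `α : 1↦1, 2↦12, 3↦13` (letters `1,2,3` are `0,1,2 : Fin 3`). -/
def mAlpha : Fin 3 → List (Fin 3) := ![[0], [0, 1], [0, 2]]

/-- `β : 1↦1, 2↦12, 3↦132`. -/
def mBeta : Fin 3 → List (Fin 3) := ![[0], [0, 1], [0, 2, 1]]

/-- `γ : 1↦1, 2↦12, 3↦123`. -/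
def mGamma : Fin 3 → List (Fin 3) := ![[0], [0, 1], [0, 1, 2]]

/-- `δ⁽ᵏ⁾ : 1↦1, 2↦123^k, 3↦123^{k+1}`. -/
def mDelta (k : ℕ) : Fin 3 → List (Fin 3) :=
  ![[0], [0, 1] ++ List.replicate k 2, [0, 1] ++ List.replicate (k + 1) 2]

/-- `ζ⁽ᵏ⁾ : 1↦13^k, 2↦12, 3↦13^{k+1}`. -/
def mZeta (k : ℕ) : Fin 3 → List (Fin 3) :=
  ![0 :: List.replicate k 2, [0, 1], 0 :: List.replicate (k + 1) 2]

/-- `η : 1↦13, 2↦12, 3↦123`. -/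
def mEta : Fin 3 → List (Fin 3) := ![[0, 2], [0, 1], [0, 1, 2]]

/-- The set `S₃` of morphisms. -/
def S3Set : Set (Fin 3 → List (Fin 3)) :=
  {mAlpha, mBeta, mGamma, mEta} ∪ {σ | ∃ k, 1 ≤ k ∧ (σ = mDelta k ∨ σ = mZeta k)}

/-- `S_LI = {α, γ}`. -/
def SLISet : Set (Fin 3 → List (Fin 3)) := {mAlpha, mGamma}

/-- `S_RI = {α, β}`. -/
def SRISet : Set (Fin 3 → List (Fin 3)) := {mAlpha, mBeta}

/-- The morphism induced by a permutation of the alphabet. -/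
def permMorph (π : Equiv.Perm (Fin 3)) : Fin 3 → List (Fin 3) := fun a => [π a]

/-- Composition of morphisms (as substitutions). -/
def compMorph {A B C : Type*} (τ : B → List C) (σ : A → List B) : A → List C :=
  fun a => applyWord τ (σ a)

/-- `Σ₃ T Σ₃` for a set `T` of morphisms of `A₃*`. -/
def SigmaSSigma (T : Set (Fin 3 → List (Fin 3))) : Set (Fin 3 → List (Fin 3)) :=
  {σ | ∃ (π π' : Equiv.Perm (Fin 3)) (τ : Fin 3 → List (Fin 3)), τ ∈ T ∧
    σ = compMorph (permMorph π) (compMorph τ (permMorph π'))}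

/-! ### S-adic representations -/

/-- `prodMorph σ m n = σ_m ∘ σ_{m+1} ∘ ⋯ ∘ σ_{m+n-1}` (as substitutions). -/
def prodMorph {A : Type*} (σ : ℕ → A → List A) : ℕ → ℕ → A → List A
  | _, 0 => fun a => [a]
  | m, n + 1 => compMorph (σ m) (prodMorph σ (m + 1) n)

/-- The language of level `n` of a directive sequence (0-indexed: `levelLang σ 0`
is the language of level 1 of the paper). -/
def levelLang {A : Type*} (σ : ℕ → A → List A) (n : ℕ) : Set (List A) :=
  {w | ∃ (m : ℕ) (a : A), 0 < m ∧ w <:+: prodMorph σ n m a}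

/-- The shift space `X_σ^{(n+1)}` generated by the language of level `n+1`. -/
def levelShift {A : Type*} (σ : ℕ → A → List A) (n : ℕ) : Set (ℤ → A) :=
  {x | ∀ w, occursIn w x → w ∈ levelLang σ n}

/-- The growth condition `max_a |σ_{[1,n)}(a)| → ∞`. -/
def SAdicGrowth {A : Type*} [Fintype A] (σ : ℕ → A → List A) : Prop :=
  Filter.Tendsto (fun n => Finset.univ.sup fun a : A => (prodMorph σ 0 n a).length)
    Filter.atTop Filter.atTop

/-- `σ` is an S-adic representation of `X`. -/
def IsSAdicRep {A : Type*} [Fintype A] (σ : ℕ → A → List A) (X : Set (ℤ → A)) : Prop :=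
  SAdicGrowth σ ∧ X = levelShift σ 0

/-- Primitivity of a directive sequence. -/
def PrimitiveSeq {A : Type*} (σ : ℕ → A → List A) : Prop :=
  ∀ n, ∃ m, 0 < m ∧ ∀ a b : A, a ∈ prodMorph σ n m b

/-- `X` is a shift space over `A₃`: every letter belongs to the language. -/
def ShiftOver3 (X : Set (ℤ → Fin 3)) : Prop := ∀ a : Fin 3, [a] ∈ language X

/-- A minimal dendric shift over `A₃`. -/
def MinimalDendric3 (X : Set (ℤ → Fin 3)) : Prop :=
  IsMinimalShift X ∧ (∀ w ∈ language X, IsDendric X w) ∧ ShiftOver3 X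

/-! ### Induced transformations -/

/-- `I` is recurrent for `T`. -/
def RecurrentSet {Ω : Type*} (T : Ω → Ω) (I : Set Ω) : Prop :=
  ∀ x ∈ I, ∃ n, 0 < n ∧ T^[n] x ∈ I

/-- First return time of `x` to `I` under `T`. -/
noncomputable def returnTime {Ω : Type*} (T : Ω → Ω) (I : Set Ω) (x : Ω) : ℕ :=
  sInf {n | 0 < n ∧ T^[n] x ∈ I}

/-- The transformation induced by `T` on `I`. -/
noncomputable def inducedMap {Ω : Type*} (T : Ω → Ω) (I : Set Ω) : Ω → Ω :=
  fun x => T^[returnTime T I x] x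

/-- The Arnoux-Rauzy morphism `α_a : a ↦ a, b ↦ ab (b ≠ a)`. -/
def arAlpha {A : Type*} [DecidableEq A] (a : A) : A → List A :=
  fun b => if b = a then [a] else [a, b]

/-- The Arnoux-Rauzy morphism `ᾱ_a : a ↦ a, b ↦ ba (b ≠ a)`. -/
def arAlphaBar {A : Type*} [DecidableEq A] (a : A) : A → List A :=
  fun b => if b = a then [a] else [b, a]


/-!
Every `σ a` begins with `ℓ` and contains no other `ℓ`, so the occurrences of `ℓ` in `σ w` are
exactly the starting points of the blocks `σ wᵢ`. A factor `u` of the image shift occurs in some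
`σ w` with `w ∈ L(X)`, and not as a prefix of it. Cutting `σ w` at the block boundaries: if `u`
avoids `ℓ` it cannot reach the next block, so it lies inside one `σ b`, after its first letter;
otherwise `u = s σ(v) p`, where `s` is what precedes the first `ℓ` of `u` and `p` starts at its
last `ℓ`. These two positions determine `s` and `p`, hence `σ v`, hence `v` by injectivity.
-/

namespace List

variable {α : Type*}

lemma eq_of_append_cons_eq_append_cons_of_notMem_left {a : α} {s s' r r' : List α}
    (hs : a ∉ s) (hs' : a ∉ s') (h : s ++ a :: r = s' ++ a :: r') : s = s' ∧ r = r' := by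
  have hlen : s.length = s'.length := by
    simpa [List.idxOf_append_of_notMem hs, List.idxOf_append_of_notMem hs'] using
      congrArg (List.idxOf a) h
  obtain ⟨rfl, hr⟩ := List.append_inj h hlen
  exact ⟨rfl, List.cons_injective hr⟩

lemma eq_of_append_cons_eq_append_cons_of_notMem_right {a : α} {s s' r r' : List α}
    (hr : a ∉ r) (hr' : a ∉ r') (h : s ++ a :: r = s' ++ a :: r') : s = s' ∧ r = r' := by
  have hrev : r.reverse ++ a :: s.reverse = r'.reverse ++ a :: s'.reverse := by
    simpa using congrArg List.reverse h
  obtain ⟨h₁, h₂⟩ := eq_of_append_cons_eq_append_cons_of_notMem_left (by simpa) (by simpa) hrev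
  exact ⟨List.reverse_injective h₂, List.reverse_injective h₁⟩

lemma take_drop_eq_of_getElem? {l u : List α} {o : ℕ} (h : ∀ t < u.length, l[o + t]? = u[t]?) :
    (l.drop o).take u.length = u := by
  refine List.ext_getElem? fun t => ?_
  rw [List.getElem?_take, List.getElem?_drop]
  split_ifs with ht
  · exact h t ht
  · exact (List.getElem?_eq_none (by omega)).symm

end List

section Morphism

variable {A B : Type*} {σ : A → List B}

lemma applyWord_cons (a : A) (w : List A) : applyWord σ (a :: w) = σ a ++ applyWord σ w := by
  simp [applyWord]

lemma applyWord_append (v w : List A) :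
    applyWord σ (v ++ w) = applyWord σ v ++ applyWord σ w := by
  simp [applyWord]

lemma length_le_length_applyWord (hne : ∀ a, σ a ≠ []) (w : List A) :
    w.length ≤ (applyWord σ w).length := by
  induction w with
  | nil => simp
  | cons a w ih =>
    have := List.length_pos_iff.mpr (hne a)
    simp only [applyWord_cons, List.length_cons, List.length_append]
    omega

lemma exists_cut_of_applyWord_eq_append {w : List A} {x z : List B}
    (h : applyWord σ w = x ++ z) (hx : x ≠ []) :
    ∃ w₁ a w₂ x₂ s, w = w₁ ++ a :: w₂ ∧ x = applyWord σ w₁ ++ x₂ ∧ x₂ ≠ [] ∧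
      σ a = x₂ ++ s ∧ z = s ++ applyWord σ w₂ := by
  induction w generalizing x with
  | nil => simp_all [applyWord]
  | cons c w ih =>
    rw [applyWord_cons] at h
    rcases List.append_eq_append_iff.mp h with ⟨x', rfl, hw⟩ | ⟨s, hc, rfl⟩
    · by_cases hx' : x' = []
      · subst hx'
        exact ⟨[], c, w, σ c, [], rfl, by simp [applyWord], by simpa using hx, by simp,
          by simpa using hw.symm⟩
      · obtain ⟨w₁, a, w₂, x₂, s, rfl, rfl, hx₂, ha, rfl⟩ := ih hw hx'
        exact ⟨c :: w₁, a, w₂, x₂, s, rfl, by simp [applyWord_cons], hx₂, ha, rfl⟩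
    · exact ⟨[], c, w, x, s, rfl, by simp [applyWord], hx, hc, rfl⟩

end Morphism

namespace StronglyLeftProper

variable {A B : Type*} {σ : A → List B} {ℓ : B}

lemma ne_nil (hσ : StronglyLeftProper σ ℓ) (a : A) : σ a ≠ [] := by
  obtain ⟨t, ht, -⟩ := hσ a
  simp [ht]

lemma applyWord_eq_cons (hσ : StronglyLeftProper σ ℓ) {w : List A} (hw : w ≠ []) :
    ∃ t, applyWord σ w = ℓ :: t := by
  obtain ⟨c, w, rfl⟩ := List.exists_cons_of_ne_nil hw
  obtain ⟨t, ht, -⟩ := hσ c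
  exact ⟨t ++ applyWord σ w, by rw [applyWord_cons, ht, List.cons_append]⟩

lemma applyWord_append_cons_eq_cons (hσ : StronglyLeftProper σ ℓ) (v : List A) (p : List B) :
    ∃ r, applyWord σ v ++ ℓ :: p = ℓ :: r := by
  rcases eq_or_ne v [] with rfl | hv
  · exact ⟨p, rfl⟩
  · obtain ⟨t, ht⟩ := hσ.applyWord_eq_cons hv
    exact ⟨t ++ ℓ :: p, by rw [ht, List.cons_append]⟩

lemma notMem_of_eq_append (hσ : StronglyLeftProper σ ℓ) {a : A} {x s : List B}
    (h : σ a = x ++ s) (hx : x ≠ []) : ℓ ∉ s := by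
  obtain ⟨t, ht, hℓt⟩ := hσ a
  obtain ⟨x₀, x, rfl⟩ := List.exists_cons_of_ne_nil hx
  rw [ht, List.cons_append, List.cons.injEq] at h
  exact fun hs => hℓt (h.2 ▸ List.mem_append_right x hs)

lemma notMem_of_suffix (hσ : StronglyLeftProper σ ℓ) {a : A} {s : List B}
    (hs : s <:+ σ a) (hsa : s ≠ σ a) : ℓ ∉ s := by
  obtain ⟨x, hx⟩ := hs
  exact hσ.notMem_of_eq_append hx.symm (by rintro rfl; exact hsa hx)

lemma eq_cons_of_prefix (hσ : StronglyLeftProper σ ℓ) {b : A} {p : List B}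
    (hp : p ≠ []) (hpb : p <+: σ b) : ∃ p₀, p = ℓ :: p₀ ∧ ℓ ∉ p₀ := by
  obtain ⟨t, ht, hℓt⟩ := hσ b
  obtain ⟨p₁, p₀, rfl⟩ := List.exists_cons_of_ne_nil hp
  obtain ⟨r, hr⟩ := hpb
  rw [ht, List.cons_append, List.cons.injEq] at hr
  obtain ⟨rfl, hr⟩ := hr
  exact ⟨p₀, rfl, fun hp₀ => hℓt (hr ▸ List.mem_append_left r hp₀)⟩

lemma exists_eq_append_of_notMem (hσ : StronglyLeftProper σ ℓ) {w : List A} {x u y : List B}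
    (h : applyWord σ w = x ++ u ++ y) (hx : x ≠ []) (hu : ℓ ∉ u) :
    ∃ b x' y', x' ≠ [] ∧ σ b = x' ++ u ++ y' := by
  obtain ⟨w₁, a, w₂, x₂, s, -, -, hx₂, ha, hs⟩ :=
    exists_cut_of_applyWord_eq_append (by rw [h, List.append_assoc]) hx
  rcases List.append_eq_append_iff.mp hs with ⟨y', rfl, -⟩ | ⟨d, rfl, hw₂⟩
  · exact ⟨a, x₂, y', hx₂, by rw [ha, List.append_assoc]⟩
  · -- otherwise `u` reaches into `σ w₂`, whose first letter is `ℓ`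
    rcases eq_or_ne d [] with rfl | hd
    · exact ⟨a, x₂, [], hx₂, by rw [ha, List.append_nil, List.append_nil]⟩
    have hw₂₀ : w₂ ≠ [] := by rintro rfl; simp_all [applyWord]
    obtain ⟨t, ht⟩ := hσ.applyWord_eq_cons hw₂₀
    obtain ⟨d₀, d, rfl⟩ := List.exists_cons_of_ne_nil hd
    rw [ht, List.cons_append, List.cons.injEq] at hw₂
    exact absurd (hw₂.1 ▸ List.mem_append_right s List.mem_cons_self) hu

lemma exists_eq_append_applyWord_append_of_mem (hσ : StronglyLeftProper σ ℓ) {w : List A}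
    {x u y : List B} (h : applyWord σ w = x ++ u ++ y) (hx : x ≠ []) (hu : ℓ ∈ u) :
    ∃ w₁ a v b w₂ s p, w = w₁ ++ a :: (v ++ b :: w₂) ∧ u = s ++ applyWord σ v ++ p ∧
      s <:+ σ a ∧ s ≠ σ a ∧ p ≠ [] ∧ p <+: σ b := by
  obtain ⟨w₁, a, w', x₂, s, rfl, -, hx₂, ha, hs⟩ :=
    exists_cut_of_applyWord_eq_append (by rw [h, List.append_assoc]) hx
  have hℓs : ℓ ∉ s := hσ.notMem_of_eq_append ha hx₂
  rcases List.append_eq_append_iff.mp hs with ⟨y', rfl, -⟩ | ⟨d, rfl, hw'⟩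
  · exact absurd (List.mem_append_left y' hu) hℓs
  · have hd : d ≠ [] := by rintro rfl; simp_all
    obtain ⟨v, b, w₂, p, q, rfl, rfl, hp, hb, -⟩ := exists_cut_of_applyWord_eq_append hw' hd
    refine ⟨w₁, a, v, b, w₂, s, p, rfl, (List.append_assoc _ _ _).symm, ⟨x₂, ha.symm⟩, ?_, hp,
      ⟨q, hb.symm⟩⟩
    rintro rfl
    obtain ⟨t, ht, -⟩ := hσ a
    exact hℓs (ht ▸ List.mem_cons_self)

lemma eq_of_append_applyWord_append_cons (hσ : StronglyLeftProper σ ℓ)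
    (hinj : Function.Injective (applyWord σ)) {s s' p p' : List B} {v v' : List A}
    (hs : ℓ ∉ s) (hs' : ℓ ∉ s') (hp : ℓ ∉ p) (hp' : ℓ ∉ p')
    (h : s ++ applyWord σ v ++ ℓ :: p = s' ++ applyWord σ v' ++ ℓ :: p') :
    s = s' ∧ v = v' ∧ p = p' := by
  obtain ⟨r, hr⟩ := hσ.applyWord_append_cons_eq_cons v p
  obtain ⟨r', hr'⟩ := hσ.applyWord_append_cons_eq_cons v' p'
  rw [List.append_assoc, List.append_assoc, hr, hr'] at h
  obtain ⟨rfl, rfl⟩ := List.eq_of_append_cons_eq_append_cons_of_notMem_left hs hs' h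
  obtain ⟨hv, rfl⟩ :=
    List.eq_of_append_cons_eq_append_cons_of_notMem_right hp hp' (hr.trans hr'.symm)
  exact ⟨rfl, hinj hv, rfl⟩

end StronglyLeftProper

section FactorAt

variable {A : Type*}

def factorAt (x : ℤ → A) (i : ℤ) (n : ℕ) : List A := List.ofFn fun k : Fin n => x (i + k)

@[simp]
lemma length_factorAt (x : ℤ → A) (i : ℤ) (n : ℕ) : (factorAt x i n).length = n := by
  simp [factorAt]

lemma factorAt_add (x : ℤ → A) (i : ℤ) (m n : ℕ) :
    factorAt x i (m + n) = factorAt x i m ++ factorAt x (i + m) n := by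
  simp only [factorAt, List.ofFn_add, Fin.val_castLE, Fin.val_natAdd, Nat.cast_add, add_assoc]

lemma factorAt_mem_language {X : Set (ℤ → A)} {x : ℤ → A} (hx : x ∈ X) (i : ℤ) (n : ℕ) :
    factorAt x i n ∈ language X :=
  ⟨x, hx, i, by rw [length_factorAt]; rfl⟩

lemma mem_language_of_infix {X : Set (ℤ → A)} {v w : List A} (hvw : v <:+: w)
    (hw : w ∈ language X) : v ∈ language X := by
  obtain ⟨x, hx, i, hwi⟩ := hw
  obtain ⟨pre, suf, rfl⟩ := hvw
  change _ = factorAt x i _ at hwi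
  rw [List.length_append, List.length_append, factorAt_add, factorAt_add] at hwi
  have := (List.append_inj (List.append_inj hwi (by simp)).1 (by simp)).2
  exact this ▸ factorAt_mem_language hx _ _

end FactorAt

section ApplyPoint

variable {A B : Type*} [Nonempty B] {σ : A → List B}

lemma applyPoint_of_nonneg (hne : ∀ a, σ a ≠ []) (x : ℤ → A) {m : ℤ} (hm : 0 ≤ m) {n : ℕ}
    (hmn : m < n) : (applyWord σ (factorAt x 0 n))[m.toNat]? = some (applyPoint σ x m) := by
  have hlen : m.toNat < (applyWord σ (factorAt x 0 (m.toNat + 1))).length := by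
    simpa using length_le_length_applyWord hne (factorAt x 0 (m.toNat + 1))
  have hfac : factorAt x 0 (m.toNat + 1) = List.ofFn fun k : Fin (m.toNat + 1) => x k := by
    simp [factorAt]
  obtain ⟨d, rfl⟩ : ∃ d, n = m.toNat + 1 + d := ⟨n - (m.toNat + 1), by omega⟩
  rw [applyPoint, if_pos hm, ← hfac, factorAt_add, applyWord_append,
    List.getElem?_append_left hlen, List.getD_eq_getElem?_getD, List.getElem?_eq_getElem hlen,
    Option.getD_some]

lemma applyPoint_of_neg (hne : ∀ a, σ a ≠ []) (x : ℤ → A) {m : ℤ} (hm : m < 0) {N : ℕ}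
    (hmN : -N ≤ m) :
    (applyWord σ (factorAt x (-N) N))[((applyWord σ (factorAt x (-N) N)).length + m).toNat]? =
      some (applyPoint σ x m) := by
  set K := (-m).toNat with hK
  have hfac : factorAt x (-K) K = List.ofFn fun k : Fin K => x (k - K) := by
    simp only [factorAt, neg_add_eq_sub]
  have hlen : K ≤ (applyWord σ (factorAt x (-K) K)).length := by
    simpa using length_le_length_applyWord hne (factorAt x (-K) K)
  obtain ⟨d, rfl⟩ : ∃ d, N = d + K := ⟨N - K, by omega⟩
  have hsplit : factorAt x (-(d + K : ℕ)) (d + K) =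
      factorAt x (-(d + K : ℕ)) d ++ factorAt x (-K) K := by
    rw [factorAt_add]; congr 2; push_cast; ring
  rw [applyPoint, if_neg (by omega)]
  dsimp only
  rw [← hK, ← hfac, hsplit, applyWord_append, List.getElem?_append_right (by simp; omega)]
  set P := applyWord σ (factorAt x (-(d + K : ℕ)) d)
  set L := applyWord σ (factorAt x (-K) K)
  have hi : ((P ++ L).length + m : ℤ).toNat - P.length = ((L.length : ℤ) + m).toNat := by
    simp only [List.length_append]; omega
  have hlt : ((L.length : ℤ) + m).toNat < L.length := by omega
  rw [hi, List.getD_eq_getElem?_getD, List.getElem?_eq_getElem hlt, Option.getD_some]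

lemma getElem?_applyWord_factorAt (hne : ∀ a, σ a ≠ []) (x : ℤ → A) {N n : ℕ} {m : ℤ}
    (hNm : -N ≤ m) (hmn : m < n) :
    (applyWord σ (factorAt x (-N) (N + n)))[
        ((applyWord σ (factorAt x (-N) N)).length + m).toNat]? =
      some (applyPoint σ x m) := by
  have hP : N ≤ (applyWord σ (factorAt x (-N) N)).length := by
    simpa using length_le_length_applyWord hne (factorAt x (-N) N)
  rw [factorAt_add, neg_add_cancel, applyWord_append]
  rcases lt_or_ge m 0 with hm | hm
  · rw [List.getElem?_append_left (by omega), applyPoint_of_neg hne x hm hNm]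
  · rw [List.getElem?_append_right (by omega), ← applyPoint_of_nonneg hne x hm hmn]
    congr 1
    omega

end ApplyPoint

lemma shiftMap_iterate_apply {B : Type*} (k : ℕ) (y : ℤ → B) (m : ℤ) :
    (shiftMap B)^[k] y m = y (m + k) := by
  induction k generalizing y with
  | zero => simp
  | succ k ih =>
    rw [Function.iterate_succ_apply, ih]
    simp only [shiftMap, Nat.cast_succ, add_assoc]

lemma exists_applyWord_eq_of_mem_language_shiftImage {A B : Type*} [Nonempty B]
    {σ : A → List B} (hne : ∀ a, σ a ≠ []) {X : Set (ℤ → A)} {u : List B}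
    (hu : u ∈ language (shiftImage σ X)) :
    ∃ w ∈ language X, ∃ x y, x ≠ [] ∧ applyWord σ w = x ++ u ++ y := by
  obtain ⟨_, ⟨x, hx, k, -, rfl⟩, i, hi⟩ := hu
  -- `σ(x_{-N} ⋯ x_{n-1})` covers the positions `c - 1, …, c + |u| - 1` of `σ(x)`; the letter at
  -- `c - 1` keeps the left context of `u` nonempty
  set c := i + k
  set N := (1 - c).toNat
  set n := (c + u.length).toNat
  set l := applyWord σ (factorAt x (-N) (N + n))
  set P := applyWord σ (factorAt x (-N) N)
  set o := ((P.length : ℤ) + c).toNat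
  have hP : N ≤ P.length := by simpa using length_le_length_applyWord hne (factorAt x (-N) N)
  have hl : N + n ≤ l.length := by
    simpa using length_le_length_applyWord hne (factorAt x (-N) (N + n))
  have hslice : ∀ t < u.length, l[o + t]? = u[t]? := by
    intro t ht
    have ho : o + t = ((P.length : ℤ) + (c + t)).toNat := by omega
    rw [ho, getElem?_applyWord_factorAt hne x (by omega) (by omega), hi, List.getElem?_ofFn,
      dif_pos ht, shiftMap_iterate_apply]
    congr 2
    ring
  refine ⟨_, factorAt_mem_language hx (-N) (N + n), l.take o, l.drop (o + u.length), ?_, ?_⟩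
  · simp only [ne_eq, List.take_eq_nil_iff, not_or]
    exact ⟨by omega, List.ne_nil_of_length_pos (by omega)⟩
  · calc l = l.take o ++ ((l.drop o).take u.length ++ (l.drop o).drop u.length) := by
          rw [List.take_append_drop, List.take_append_drop]
      _ = l.take o ++ u ++ l.drop (o + u.length) := by
          rw [List.take_drop_eq_of_getElem? hslice, List.drop_drop, List.append_assoc]

theorem statement_2_general {A B : Type*} [Nonempty B]
    (X : Set (ℤ → A))
    (σ : A → List B) (ℓ : B)
    (hinj : Function.Injective (applyWord σ))
    (hslp : StronglyLeftProper σ ℓ)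
    (u : List B) (hu : u ∈ language (shiftImage σ X)) :
    (ℓ ∉ u → ∃ (b : A) (x y : List B), x ≠ [] ∧ σ b = x ++ u ++ y) ∧
    (ℓ ∈ u → ∃! t : List B × List A × List B,
      t.2.1 ∈ language X ∧ u = t.1 ++ applyWord σ t.2.1 ++ t.2.2 ∧
      ∃ a b : A, (a, b) ∈ extBoth X t.2.1 ∧
        t.1 <:+ σ a ∧ t.1 ≠ σ a ∧ t.2.2 ≠ [] ∧ t.2.2 <+: σ b) := by
  obtain ⟨w, hw, x, y, hx, hxuy⟩ := exists_applyWord_eq_of_mem_language_shiftImage hslp.ne_nil hu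
  refine ⟨hslp.exists_eq_append_of_notMem hxuy hx, fun hℓu => ?_⟩
  obtain ⟨w₁, a, v, b, w₂, s, p, rfl, rfl, hsa, hsa', hp, hpb⟩ :=
    hslp.exists_eq_append_applyWord_append_of_mem hxuy hx hℓu
  have hab : (a, b) ∈ extBoth X v := mem_language_of_infix ⟨w₁, w₂, by simp⟩ hw
  refine ⟨(s, v, p),
    ⟨mem_language_of_infix ⟨[a], [b], by simp⟩ hab, rfl, a, b, hab, hsa, hsa', hp, hpb⟩, ?_⟩
  rintro ⟨s', v', p'⟩ ⟨-, huniq, a', b', -, hsa₁, hsa₁', hp', hpb'⟩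
  obtain ⟨p₀, rfl, hp₀⟩ := hslp.eq_cons_of_prefix hp hpb
  obtain ⟨p₀', rfl, hp₀'⟩ := hslp.eq_cons_of_prefix hp' hpb'
  obtain ⟨rfl, rfl, rfl⟩ := hslp.eq_of_append_applyWord_append_cons hinj
    (hslp.notMem_of_suffix hsa hsa') (hslp.notMem_of_suffix hsa₁ hsa₁') hp₀ hp₀' huniq
  rfl

/-- Proposition 3.3, existence and uniqueness of the antecedent. -/
theorem statement_2 {A B : Type*} [Fintype A] [Fintype B] [Nonempty B]
    (X : Set (ℤ → A)) (hX : IsShiftSpace X)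
    (σ : A → List B) (ℓ : B)
    (hinj : Function.Injective (applyWord σ))
    (hslp : StronglyLeftProper σ ℓ)
    (u : List B) (hu : u ∈ language (shiftImage σ X)) (hune : u ≠ []) :
    (ℓ ∉ u → ∃ (b : A) (x y : List B), x ≠ [] ∧ σ b = x ++ u ++ y) ∧
    (ℓ ∈ u → ∃! t : List B × List A × List B,
      t.2.1 ∈ language X ∧ u = t.1 ++ applyWord σ t.2.1 ++ t.2.2 ∧
      ∃ a b : A, (a, b) ∈ extBoth X t.2.1 ∧
        t.1 <:+ σ a ∧ t.1 ≠ σ a ∧ t.2.2 ≠ [] ∧ t.2.2 <+: σ b) :=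
  statement_2_general X σ ℓ hinj hslp u hu
end

section
/- Let X be a shift space over A3 = {1,2,3}. For every dendric bispecial factor v ∈ L(X), the sets C^-_X(v) and C^+_X(v) each contain at most one letter. -/
open Classical

/-!
Only the connectedness of the extension graph matters. Suppose two distinct left letters `a₁`, `a₂`
both disconnect it, and let `a₃` be the third letter. Deleting `a₁` leaves only the edges at `a₂`
and `a₃`, so it disconnects the graph exactly when `a₂` and `a₃` both have edges but no common
right neighbour; likewise for `a₂`. Then `a₃` shares no right neighbour with any other left
letter, which contradicts the connectedness of the whole graph. The right-hand statement is the
left-hand one for the mirrored graph.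
-/

section Language

variable {A : Type*} {w u : List A} {x : ℤ → A}

lemma occursIn_iff :
    occursIn w x ↔ ∃ i : ℤ, ∀ (k : ℕ) (hk : k < w.length), w[k] = x (i + k) := by
  refine exists_congr fun i => ⟨fun h k hk => ?_, fun h => List.ext_getElem (by simp) ?_⟩
  · rw [List.getElem_of_eq h]
    simp
  · intro k hk _
    simpa using h k hk

lemma occursIn.of_infix (hw : occursIn w x) (h : u <:+: w) : occursIn u x := by
  obtain ⟨s, t, rfl⟩ := h
  obtain ⟨i, hi⟩ := occursIn_iff.1 hw
  refine occursIn_iff.2 ⟨i + s.length, fun k hk => ?_⟩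
  have := hi (s.length + k) (by simp; omega)
  rw [List.getElem_append_left (by simp; omega), List.getElem_append_right (by omega)] at this
  simpa [add_assoc] using this

lemma occursIn.exists_cons (hw : occursIn w x) : ∃ a, occursIn (a :: w) x := by
  obtain ⟨i, hi⟩ := occursIn_iff.1 hw
  refine ⟨x (i - 1), occursIn_iff.2 ⟨i - 1, fun k hk => ?_⟩⟩
  cases k with
  | zero => simp
  | succ k =>
    rw [List.getElem_cons_succ, hi k (by simpa using hk)]
    congr 1
    push_cast
    ring

lemma occursIn.exists_append_singleton (hw : occursIn w x) : ∃ b, occursIn (w ++ [b]) x := by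
  obtain ⟨i, hi⟩ := occursIn_iff.1 hw
  refine ⟨x (i + w.length), occursIn_iff.2 ⟨i, fun k hk => ?_⟩⟩
  rcases (Nat.lt_succ_iff_lt_or_eq.1 (by simpa using hk)) with hk | rfl
  · rw [List.getElem_append_left hk, hi k hk]
  · simp

lemma extVertices_eq_pairSupport (X : Set (ℤ → A)) (v : List A) :
    extVertices X v = pairSupport (extBoth X v) := by
  have hleft : extLeft X v = {a | ∃ b, (a, b) ∈ extBoth X v} := by
    ext a
    refine ⟨fun ⟨y, hy, ha⟩ => ?_, fun ⟨b, y, hy, hab⟩ => ⟨y, hy, hab.of_infix ?_⟩⟩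
    · obtain ⟨b, hb⟩ := ha.exists_append_singleton
      exact ⟨b, y, hy, by simpa using hb⟩
    · exact (List.prefix_append (a :: v) [b]).isInfix
  have hright : extRight X v = {b | ∃ a, (a, b) ∈ extBoth X v} := by
    ext b
    refine ⟨fun ⟨y, hy, hb⟩ => ?_, fun ⟨a, y, hy, hab⟩ => ⟨y, hy, hab.of_infix ?_⟩⟩
    · obtain ⟨a, ha⟩ := hb.exists_cons
      exact ⟨a, y, hy, ha⟩
    · exact (List.suffix_cons a _).isInfix
  rw [extVertices, pairSupport, hleft, hright]

end Language

section ExtensionGraph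

variable {A : Type*} {E : Set (A × A)} {p : A × A}

abbrev supportGraph (E : Set (A × A)) : SimpleGraph (pairSupport E) :=
  (pairGraph E).induce (pairSupport E)

lemma inl_mem_pairSupport (hp : p ∈ E) : Sum.inl p.1 ∈ pairSupport E :=
  Or.inl ⟨p.1, ⟨p.2, hp⟩, rfl⟩

lemma inr_mem_pairSupport (hp : p ∈ E) : Sum.inr p.2 ∈ pairSupport E :=
  Or.inr ⟨p.2, ⟨p.1, hp⟩, rfl⟩

@[simp]
lemma pairGraph_adj_inl_inr {a b : A} :
    (pairGraph E).Adj (Sum.inl a) (Sum.inr b) ↔ (a, b) ∈ E := by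
  simp [pairGraph]

@[simp]
lemma pairGraph_adj_inr_inl {a b : A} :
    (pairGraph E).Adj (Sum.inr b) (Sum.inl a) ↔ (a, b) ∈ E := by
  simp [pairGraph]

@[simp]
lemma pairGraph_not_adj_inl_inl {a a' : A} : ¬ (pairGraph E).Adj (Sum.inl a) (Sum.inl a') := by
  simp [pairGraph]

@[simp]
lemma pairGraph_not_adj_inr_inr {b b' : A} : ¬ (pairGraph E).Adj (Sum.inr b) (Sum.inr b') := by
  simp [pairGraph]

lemma supportGraph_adj (hp : p ∈ E) :
    (supportGraph E).Adj ⟨_, inl_mem_pairSupport hp⟩ ⟨_, inr_mem_pairSupport hp⟩ := by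
  simpa using hp

lemma supportGraph_preconnected_of_reachable
    (h : ∀ p (hp : p ∈ E) q (hq : q ∈ E),
      (supportGraph E).Reachable ⟨_, inl_mem_pairSupport hp⟩ ⟨_, inl_mem_pairSupport hq⟩) :
    (supportGraph E).Preconnected := by
  have toInl : ∀ u : pairSupport E, ∃ p, ∃ hp : p ∈ E,
      (supportGraph E).Reachable u ⟨_, inl_mem_pairSupport hp⟩ := by
    rintro ⟨u, ⟨a, ⟨b, hab⟩, rfl⟩ | ⟨b, ⟨a, hab⟩, rfl⟩⟩
    · exact ⟨(a, b), hab, .rfl⟩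
    · exact ⟨(a, b), hab, (supportGraph_adj hab).reachable.symm⟩
  intro u v
  obtain ⟨p, hp, hu⟩ := toInl u
  obtain ⟨q, hq, hv⟩ := toInl v
  exact hu.trans ((h p hp q hq).trans hv.symm)

lemma supportGraph_preconnected_of_fst_eq (h : ∀ p ∈ E, ∀ q ∈ E, p.1 = q.1) :
    (supportGraph E).Preconnected :=
  supportGraph_preconnected_of_reachable fun p hp q hq => by
    simp_rw [h p hp q hq]
    rfl

lemma supportGraph_preconnected_of_common_snd (b : A) (h : ∀ p ∈ E, (p.1, b) ∈ E) :
    (supportGraph E).Preconnected :=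
  supportGraph_preconnected_of_reachable fun p hp q hq =>
    (supportGraph_adj (h p hp)).reachable.trans (supportGraph_adj (h q hq)).reachable.symm

lemma exists_common_snd_of_preconnected (hE : (supportGraph E).Preconnected) {a b c d : A}
    (hab : (a, b) ∈ E) (hcd : (c, d) ∈ E) (hac : a ≠ c) :
    ∃ b' c', (a, b') ∈ E ∧ (c', b') ∈ E ∧ c' ≠ a := by
  obtain ⟨w⟩ := hE ⟨_, inl_mem_pairSupport hab⟩ ⟨_, inl_mem_pairSupport hcd⟩
  -- the walk from `a` to `c` has to leave the star formed by `a` and its right neighbours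
  obtain ⟨⟨⟨⟨u, hu⟩, ⟨u', hu'⟩⟩, hadj⟩, -, hS, hS'⟩ := w.exists_boundary_dart
    {u : pairSupport E | u.1 = Sum.inl a ∨ ∃ b', u.1 = Sum.inr b' ∧ (a, b') ∈ E} (Or.inl rfl)
    (by simpa using hac.symm)
  simp only [Set.mem_ofPred_eq, SimpleGraph.comap_adj, Function.Embedding.subtype_apply]
    at hS hS' hadj
  rcases hS with rfl | ⟨b', rfl, hab'⟩ <;> rcases u' with c' | b''
  all_goals simp at hadj hS'
  · exact (hS' hadj).elim
  · exact ⟨b', c', hab', hadj, hS'⟩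

lemma supportGraph_preconnected_of_swap (h : (supportGraph (Prod.swap ⁻¹' E)).Preconnected) :
    (supportGraph E).Preconnected := by
  let φ : pairGraph (Prod.swap ⁻¹' E) →g pairGraph E :=
    ⟨Sum.swap, fun {u v} huv => by rcases u with a | b <;> rcases v with a' | b' <;> simp_all⟩
  refine h.map (SimpleGraph.induceHom φ ?_) ?_
  · rintro _ (⟨a, ⟨b, hab⟩, rfl⟩ | ⟨b, ⟨a, hab⟩, rfl⟩)
    exacts [inr_mem_pairSupport (p := (b, a)) hab, inl_mem_pairSupport (p := (b, a)) hab]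
  · rintro ⟨_, ⟨a, ⟨b, hab⟩, rfl⟩ | ⟨b, ⟨a, hab⟩, rfl⟩⟩
    exacts [⟨⟨_, inr_mem_pairSupport (p := (b, a)) hab⟩, rfl⟩,
      ⟨⟨_, inl_mem_pairSupport (p := (b, a)) hab⟩, rfl⟩]

lemma supportGraph_preconnected_swap_iff :
    (supportGraph (Prod.swap ⁻¹' E)).Preconnected ↔ (supportGraph E).Preconnected :=
  ⟨supportGraph_preconnected_of_swap, supportGraph_preconnected_of_swap (E := Prod.swap ⁻¹' E)⟩

lemma neighbors_of_not_preconnected_delLeft {a₁ a₂ a₃ : A} (h₂ : a₂ ≠ a₁) (h₃ : a₃ ≠ a₁)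
    (hcover : ∀ c, c = a₁ ∨ c = a₂ ∨ c = a₃)
    (hcut : ¬ (supportGraph (delLeft E a₁)).Preconnected) :
    (∃ b, (a₂, b) ∈ E) ∧ (∃ b, (a₃, b) ∈ E) ∧ ∀ b, (a₂, b) ∈ E → (a₃, b) ∉ E := by
  have hfst : ∀ p ∈ delLeft E a₁, p.1 = a₂ ∨ p.1 = a₃ := fun p hp =>
    (hcover p.1).resolve_left hp.2
  by_contra! h
  apply hcut
  by_cases hboth : (∃ b, (a₂, b) ∈ E) ∧ (∃ b, (a₃, b) ∈ E)
  · obtain ⟨b, hb₂, hb₃⟩ := h hboth.1 hboth.2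
    refine supportGraph_preconnected_of_common_snd b fun p hp => ?_
    rcases hfst p hp with hp₁ | hp₁ <;> rw [hp₁]
    exacts [⟨hb₂, h₂⟩, ⟨hb₃, h₃⟩]
  · refine supportGraph_preconnected_of_fst_eq fun p hp q hq => ?_
    grind [hp.1, hq.1]

end ExtensionGraph

theorem subsingleton_setOf_not_preconnected_delLeft {E : Set (Fin 3 × Fin 3)}
    (hE : (supportGraph E).Preconnected) :
    {a | ¬ (supportGraph (delLeft E a)).Preconnected}.Subsingleton := by
  intro a₁ h₁ a₂ h₂
  by_contra hne
  have third : ∀ a₁ a₂ : Fin 3, a₁ ≠ a₂ →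
      ∃ a₃, a₃ ≠ a₁ ∧ a₃ ≠ a₂ ∧ ∀ c, c = a₁ ∨ c = a₂ ∨ c = a₃ := by decide
  obtain ⟨a₃, h₃₁, h₃₂, hcover⟩ := third a₁ a₂ hne
  obtain ⟨⟨b₂, hb₂⟩, ⟨b₃, hb₃⟩, h₂₃⟩ :=
    neighbors_of_not_preconnected_delLeft (Ne.symm hne) h₃₁ hcover h₁
  obtain ⟨-, -, h₁₃⟩ :=
    neighbors_of_not_preconnected_delLeft hne h₃₂ (fun c => by grind) h₂
  obtain ⟨b, c, h₃b, hcb, hc⟩ := exists_common_snd_of_preconnected hE hb₃ hb₂ h₃₂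
  rcases hcover c with rfl | rfl | rfl
  · exact h₁₃ b hcb h₃b
  · exact h₂₃ b hcb h₃b
  · exact hc rfl

theorem subsingleton_setOf_not_preconnected_delRight {E : Set (Fin 3 × Fin 3)}
    (hE : (supportGraph E).Preconnected) :
    {b | ¬ (supportGraph (delRight E b)).Preconnected}.Subsingleton :=
  -- `delRight E b` is definitionally `Prod.swap ⁻¹' delLeft (Prod.swap ⁻¹' E) b`.
  (subsingleton_setOf_not_preconnected_delLeft
    (supportGraph_preconnected_swap_iff.2 hE)).anti fun _ hb h =>
      hb (supportGraph_preconnected_swap_iff.1 h)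

theorem statement_11_general (X : Set (ℤ → Fin 3))
    (v : List (Fin 3)) (hden : IsDendric X v) :
    (Cminus X v).Subsingleton ∧ (Cplus X v).Subsingleton := by
  rw [IsDendric, extVertices_eq_pairSupport] at hden
  have hE : (supportGraph (extBoth X v)).Preconnected := hden.connected.preconnected
  exact ⟨subsingleton_setOf_not_preconnected_delLeft hE,
    subsingleton_setOf_not_preconnected_delRight hE⟩

/-- Lemma 4.3, the sets `C⁻(v)` and `C⁺(v)` contain at most one
letter. -/
theorem statement_11 (X : Set (ℤ → Fin 3)) (hX : IsShiftSpace X) (h3 : ShiftOver3 X)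
    (v : List (Fin 3)) (hv : v ∈ language X) (hden : IsDendric X v)
    (hbi : Bispecial X v) :
    (Cminus X v).Subsingleton ∧ (Cplus X v).Subsingleton :=
  statement_11_general X v hden
end
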